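/- arXiv:2211.10500 — 3 statements merged into one kernel-verified Lean document; each statement's English description precedes it below -/
import Mathlib

section
/- Let φ_1,…,φ_r be symmetric polynomials of the shape φ_j(z) = Σ_{l=1}^k a_{jl} σ_l(z) with respective degrees k_1,…,k_r satisfying 1 ≤ k_1 < k_2 < … < k_r = k. Then for each ε > 0 one has N_k(X;φ) = T_k(X) + O(X^{w(φ)+1+ε}) as X → ∞. -/
/-!
Put `P_x(t) = ∏ (t + x_i)`, so that `σ_l(x)` is the coefficient of `t^(k-l)`. For a solution
`(x, y)` that is not a permutation, `h = P_x - P_y` is a nonzero polynomial of degree `< k`. The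
equations `φ_j(x) = φ_j(y)` are triangular in the coefficients of `h` (as `a_{j,k_j} ≠ 0`), so `h`
is determined by its coefficients at `t^(k-l)`, `l ∉ {k_1, …, k_r}`; these are `O(X^l)`, giving
`O(X^w(φ))` possible `h`. For a fixed `h ≠ 0` there are `O(X^(1+ε))` pairs: if `h(-x_i) ≠ 0`, then
`h(-x_i) = -∏_j (y_j - x_i)`, so each `y_j - x_i` is one of the `O(X^ε)` divisors of this
`O(X^k)` integer, and then `x` is among the roots of `P_y + h`; the case `h(-y_i) ≠ 0` is
symmetric, and if all `-x_i`, `-y_i` are roots of `h` there are `O(1)` pairs.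
-/

open Finset Asymptotics Filter

/-- The elementary symmetric polynomial `σ_l` evaluated at the integer tuple `x`. -/
def esymm (k l : ℕ) (x : Fin k → ℤ) : ℤ :=
  ∑ s ∈ Finset.powersetCard l (Finset.univ : Finset (Fin k)), ∏ i ∈ s, x i

/-- The number of pairs `(x, y)` of integer `k`-tuples with all entries in `[1, X]`
satisfying the relation `P`. -/
noncomputable def pairCount (k X : ℕ) (P : (Fin k → ℤ) → (Fin k → ℤ) → Prop) : ℕ :=
  Nat.card {p : (Fin k → ℤ) × (Fin k → ℤ) //
    (∀ i, 1 ≤ p.1 i ∧ p.1 i ≤ (X : ℤ)) ∧ (∀ i, 1 ≤ p.2 i ∧ p.2 i ≤ (X : ℤ)) ∧ P p.1 p.2}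

/-- `T_k(X)`: the number of pairs `(x, y)` of integer `k`-tuples with entries in `[1, X]`
for which `y` is a permutation of `x`. -/
noncomputable def permCount (k X : ℕ) : ℕ :=
  pairCount k X (fun x y => ∃ π : Equiv.Perm (Fin k), y = x ∘ π)

open Polynomial

section TuplePoly

variable {R : Type*} [CommRing R] {k : ℕ}

noncomputable def tuplePoly (x : Fin k → R) : R[X] :=
  ∏ i, (X + C (x i))

theorem tuplePoly_monic (x : Fin k → R) : (tuplePoly x).Monic :=
  monic_prod_of_monic _ _ fun i _ => monic_X_add_C (x i)

theorem natDegree_tuplePoly [Nontrivial R] (x : Fin k → R) : (tuplePoly x).natDegree = k := by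
  simp [tuplePoly, natDegree_prod_of_monic _ _ fun i _ => monic_X_add_C (x i)]

theorem eval_tuplePoly (x : Fin k → R) (t : R) : (tuplePoly x).eval t = ∏ i, (t + x i) := by
  simp [tuplePoly, eval_prod]

theorem eval_neg_apply_tuplePoly (x : Fin k → R) (i : Fin k) : (tuplePoly x).eval (-x i) = 0 :=
  (eval_tuplePoly x _).trans (prod_eq_zero (mem_univ i) (neg_add_cancel _))

theorem tuplePoly_comp_perm (x : Fin k → R) (π : Equiv.Perm (Fin k)) :
    tuplePoly (x ∘ π) = tuplePoly x :=
  Equiv.prod_comp π fun i => X + C (x i)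

theorem coeff_tuplePoly_sub_eq_zero [Nontrivial R] {n : ℕ} (x y : Fin k → R) (hn : k ≤ n) :
    (tuplePoly x - tuplePoly y).coeff n = 0 := by
  rcases hn.eq_or_lt with rfl | hlt
  · have hx := (tuplePoly_monic x).coeff_natDegree
    have hy := (tuplePoly_monic y).coeff_natDegree
    rw [natDegree_tuplePoly] at hx hy
    rw [coeff_sub, hx, hy, sub_self]
  · exact coeff_eq_zero_of_natDegree_lt
      ((natDegree_sub_le_of_le (natDegree_tuplePoly x).le (natDegree_tuplePoly y).le).trans_lt
        (by rwa [max_self]))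

theorem tuplePoly_sub_eq_of_coeff_eq [Nontrivial R] {x y x' y' : Fin k → R}
    (h : ∀ l ∈ Icc 1 k, (tuplePoly x - tuplePoly y).coeff (k - l) =
      (tuplePoly x' - tuplePoly y').coeff (k - l)) :
    tuplePoly x - tuplePoly y = tuplePoly x' - tuplePoly y' := by
  ext n
  rcases lt_or_ge n k with hn | hn
  · simpa [Nat.sub_sub_self hn.le] using h (k - n) (mem_Icc.2 ⟨by omega, by omega⟩)
  · rw [coeff_tuplePoly_sub_eq_zero x y hn, coeff_tuplePoly_sub_eq_zero x' y' hn]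

theorem roots_tuplePoly [IsDomain R] (x : Fin k → R) :
    (tuplePoly x).roots = univ.val.map fun i => -x i := by
  rw [← roots_multiset_prod_X_sub_C (univ.val.map fun i => -x i), Multiset.map_map]
  simp [tuplePoly, Finset.prod_eq_multiset_prod]

theorem exists_perm_of_map_univ_val_eq {α : Type*} [LinearOrder α] {x y : Fin k → α}
    (h : univ.val.map x = univ.val.map y) : ∃ π : Equiv.Perm (Fin k), y = x ∘ π := by
  have hperm : (List.ofFn x).Perm (List.ofFn y) := by
    simpa only [Fin.univ_val_map, Multiset.coe_eq_coe] using h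
  have hsorted : x ∘ Tuple.sort x = y ∘ Tuple.sort y :=
    List.ofFn_injective <| List.Perm.eq_of_sortedLE
      (Tuple.monotone_sort x).sortedLE_ofFn (Tuple.monotone_sort y).sortedLE_ofFn
      (((Tuple.sort x).ofFn_comp_perm x).trans hperm |>.trans
        ((Tuple.sort y).ofFn_comp_perm y).symm)
  refine ⟨(Tuple.sort y).symm.trans (Tuple.sort x), funext fun i => ?_⟩
  simpa using (congrFun hsorted ((Tuple.sort y).symm i)).symm

theorem exists_perm_of_tuplePoly_eq [IsDomain R] [LinearOrder R] {x y : Fin k → R}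
    (h : tuplePoly x = tuplePoly y) : ∃ π : Equiv.Perm (Fin k), y = x ∘ π := by
  have hneg := congrArg (Multiset.map Neg.neg) (congrArg roots h)
  simp only [roots_tuplePoly, Multiset.map_map, Function.comp_def, neg_neg] at hneg
  exact exists_perm_of_map_univ_val_eq hneg

end TuplePoly

theorem coeff_tuplePoly {k l : ℕ} (x : Fin k → ℤ) (hl : l ≤ k) :
    (tuplePoly x).coeff (k - l) = esymm k l x := by
  rw [tuplePoly, Finset.prod_X_add_C_coeff _ _ (by simp), esymm, card_univ, Fintype.card_fin,
    Nat.sub_sub_self hl]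

theorem esymm_comp_perm {k l : ℕ} (x : Fin k → ℤ) (π : Equiv.Perm (Fin k)) (hl : l ≤ k) :
    esymm k l (x ∘ π) = esymm k l x := by
  rw [← coeff_tuplePoly _ hl, ← coeff_tuplePoly _ hl, tuplePoly_comp_perm]

noncomputable def cube (k X : ℕ) : Finset (Fin k → ℤ) :=
  Fintype.piFinset fun _ => Icc 1 (X : ℤ)

theorem mem_cube {k X : ℕ} {x : Fin k → ℤ} : x ∈ cube k X ↔ ∀ i, 1 ≤ x i ∧ x i ≤ (X : ℤ) := by
  simp [cube]

theorem pairCount_eq_card (k X : ℕ) (P : (Fin k → ℤ) → (Fin k → ℤ) → Prop) [DecidableRel P] :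
    pairCount k X P = #{p ∈ cube k X ×ˢ cube k X | P p.1 p.2} := by
  rw [pairCount, ← Nat.card_eq_finsetCard]
  exact Nat.card_congr <| Equiv.subtypeEquivRight fun p => by simp [mem_cube, and_assoc]

noncomputable def nonPermPairs (k X : ℕ) (P : (Fin k → ℤ) → (Fin k → ℤ) → Prop)
    [DecidableRel P] : Finset ((Fin k → ℤ) × (Fin k → ℤ)) :=
  {p ∈ cube k X ×ˢ cube k X | P p.1 p.2 ∧ ¬∃ π : Equiv.Perm (Fin k), p.2 = p.1 ∘ π}

theorem pairCount_sub_permCount (k X : ℕ) {P : (Fin k → ℤ) → (Fin k → ℤ) → Prop} [DecidableRel P]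
    (hP : ∀ x (π : Equiv.Perm (Fin k)), P x (x ∘ π)) :
    (pairCount k X P : ℝ) - permCount k X = #(nonPermPairs k X P) := by
  have hperm : {p ∈ cube k X ×ˢ cube k X | ∃ π : Equiv.Perm (Fin k), p.2 = p.1 ∘ π} =
      {p ∈ cube k X ×ˢ cube k X | P p.1 p.2 ∧ ∃ π : Equiv.Perm (Fin k), p.2 = p.1 ∘ π} :=
    filter_congr fun p _ => ⟨fun ⟨π, hπ⟩ => ⟨hπ ▸ hP p.1 π, π, hπ⟩, And.right⟩
  rw [permCount, pairCount_eq_card, pairCount_eq_card, hperm, nonPermPairs, ← filter_filter,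
    ← filter_filter, ← card_filter_add_card_filter_not (s := {p ∈ cube k X ×ˢ cube k X | P p.1 p.2})
      (fun p => ∃ π : Equiv.Perm (Fin k), p.2 = p.1 ∘ π)]
  push_cast
  ring

theorem abs_eval_neg_tuplePoly_le {k X : ℕ} {x : Fin k → ℤ} (hx : x ∈ cube k X) {t : ℤ}
    (ht : t ∈ Icc 1 (X : ℤ)) : |(tuplePoly x).eval (-t)| ≤ (X : ℤ) ^ k := by
  obtain ⟨ht1, ht2⟩ := mem_Icc.1 ht
  rw [eval_tuplePoly, abs_prod]
  calc ∏ i, |-t + x i| ≤ ∏ _i : Fin k, (X : ℤ) := prod_le_prod (fun _ _ => abs_nonneg _) fun i _ =>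
        abs_le.2 ⟨by linarith [(mem_cube.1 hx i).1], by linarith [(mem_cube.1 hx i).2]⟩
    _ = (X : ℤ) ^ k := by simp

theorem abs_esymm_le {k l X : ℕ} {x : Fin k → ℤ} (hx : x ∈ cube k X) :
    |esymm k l x| ≤ 2 ^ k * (X : ℤ) ^ l := by
  have hprod : ∀ s ∈ powersetCard l (univ : Finset (Fin k)), |∏ i ∈ s, x i| ≤ (X : ℤ) ^ l := by
    intro s hs
    rw [abs_prod, ← (mem_powersetCard.1 hs).2, ← prod_const]
    exact prod_le_prod (fun _ _ => abs_nonneg _) fun i _ =>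
      abs_le.2 ⟨by linarith [(mem_cube.1 hx i).1], (mem_cube.1 hx i).2⟩
  calc |esymm k l x| ≤ ∑ s ∈ powersetCard l (univ : Finset (Fin k)), (X : ℤ) ^ l :=
        (abs_sum_le_sum_abs _ _).trans (sum_le_sum hprod)
    _ = (k.choose l : ℤ) * (X : ℤ) ^ l := by simp
    _ ≤ 2 ^ k * (X : ℤ) ^ l := by gcongr; exact_mod_cast k.choose_le_two_pow l

section DivisorBound

variable {δ : ℝ}

theorem natCast_add_one_le_rpow_pow (hδ : 0 < δ) {p : ℕ} (hp : (2 : ℝ) ^ (1 / δ) ≤ p) (a : ℕ) :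
    (a : ℝ) + 1 ≤ ((p : ℝ) ^ a) ^ δ := by
  have h2p : (2 : ℝ) ≤ (p : ℝ) ^ δ := by
    calc (2 : ℝ) = ((2 : ℝ) ^ (1 / δ)) ^ δ := by
          rw [← Real.rpow_mul zero_le_two, one_div_mul_cancel hδ.ne', Real.rpow_one]
      _ ≤ (p : ℝ) ^ δ := by gcongr
  calc (a : ℝ) + 1 ≤ 2 ^ a := by exact_mod_cast a.lt_two_pow_self
    _ ≤ ((p : ℝ) ^ δ) ^ a := by gcongr
    _ = ((p : ℝ) ^ a) ^ δ := by rw [← Real.rpow_natCast, ← Real.rpow_natCast, ← Real.rpow_mul,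
          ← Real.rpow_mul, mul_comm] <;> positivity

theorem natCast_add_one_le_mul_rpow_pow (hδ : 0 < δ) {p : ℕ} (hp : 2 ≤ p) (a : ℕ) :
    (a : ℝ) + 1 ≤ (1 + 1 / (δ * Real.log 2)) * ((p : ℝ) ^ a) ^ δ := by
  set L := δ * Real.log 2
  have hL : 0 < L := mul_pos hδ (Real.log_pos one_lt_two)
  -- `a + 1 ≤ (1 + 1/L) (1 + a L)` and `1 + a L ≤ exp (a L) = (2 ^ a) ^ δ`
  have hexp : 1 + a * L ≤ ((2 : ℝ) ^ a) ^ δ := by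
    rw [← Real.rpow_natCast, ← Real.rpow_mul zero_le_two, Real.rpow_def_of_pos two_pos]
    linarith [Real.add_one_le_exp (Real.log 2 * (a * δ)), show Real.log 2 * (a * δ) = a * L by ring]
  calc (a : ℝ) + 1 ≤ (1 + 1 / L) * (1 + a * L) := by
        field_simp
        nlinarith [mul_pos hL hL, sq_nonneg (a * L), (a.cast_nonneg : (0 : ℝ) ≤ a)]
    _ ≤ (1 + 1 / L) * ((p : ℝ) ^ a) ^ δ := by
        gcongr
        exact hexp.trans (by gcongr; exact_mod_cast hp)

theorem Nat.exists_card_divisors_le_mul_rpow (hδ : 0 < δ) :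
    ∃ C : ℝ, 0 ≤ C ∧ ∀ n : ℕ, n ≠ 0 → (#n.divisors : ℝ) ≤ C * (n : ℝ) ^ δ := by
  set C₀ := 1 + 1 / (δ * Real.log 2)
  have hC₀ : 1 ≤ C₀ := le_add_of_nonneg_right (by have := Real.log_pos one_lt_two; positivity)
  set T := ⌈(2 : ℝ) ^ (1 / δ)⌉₊
  refine ⟨C₀ ^ T, by positivity, fun n hn => ?_⟩
  -- only the primes below `T` contribute a constant factor `C₀`
  have hfactor : ∀ p ∈ n.primeFactors, (n.factorization p : ℝ) + 1 ≤
      (if p < T then C₀ else 1) * ((p : ℝ) ^ n.factorization p) ^ δ := by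
    intro p hp
    split_ifs with hpT
    · exact natCast_add_one_le_mul_rpow_pow hδ (Nat.prime_of_mem_primeFactors hp).two_le _
    · rw [one_mul]
      exact natCast_add_one_le_rpow_pow hδ
        ((Nat.le_ceil _).trans (by exact_mod_cast not_lt.1 hpT)) _
  have hsmall : ∏ p ∈ n.primeFactors, (if p < T then C₀ else 1) ≤ C₀ ^ T := by
    rw [prod_ite, prod_const, prod_const_one, mul_one]
    refine pow_le_pow_right₀ hC₀ ((card_le_card fun p hp => ?_).trans (card_range T).le)
    exact mem_range.2 (mem_filter.1 hp).2
  have hn' : (n : ℝ) ^ δ = ∏ p ∈ n.primeFactors, ((p : ℝ) ^ n.factorization p) ^ δ := by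
    rw [Real.finsetProd_rpow _ _ (fun _ _ => by positivity)]
    exact_mod_cast congrArg (fun m : ℕ => (m : ℝ) ^ δ) (Nat.prod_factorization_pow_eq_self hn).symm
  calc (#n.divisors : ℝ) = ∏ p ∈ n.primeFactors, ((n.factorization p : ℝ) + 1) := by
        rw [Nat.card_divisors hn]; push_cast; rfl
    _ ≤ ∏ p ∈ n.primeFactors, (if p < T then C₀ else 1) * ((p : ℝ) ^ n.factorization p) ^ δ :=
        prod_le_prod (fun _ _ => by positivity) hfactor
    _ ≤ C₀ ^ T * (n : ℝ) ^ δ := by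
        rw [prod_mul_distrib, hn']
        gcongr

end DivisorBound

theorem Int.card_divisors (z : ℤ) : #z.divisors = 2 * #z.natAbs.divisors := by
  rw [Int.divisors, card_disjUnion, card_map, card_map, two_mul]

theorem Int.exists_card_divisors_le_mul_rpow {δ : ℝ} (hδ : 0 < δ) :
    ∃ C : ℝ, 0 ≤ C ∧ ∀ m : ℤ, (#m.divisors : ℝ) ≤ C * (|m| : ℝ) ^ δ := by
  obtain ⟨C, hC, hdiv⟩ := Nat.exists_card_divisors_le_mul_rpow hδ
  refine ⟨2 * C, by positivity, fun m => ?_⟩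
  rcases eq_or_ne m 0 with rfl | hm
  · simp [Real.zero_rpow hδ.ne']
  rw [Int.card_divisors, Nat.cast_mul, Nat.cast_two, mul_assoc]
  simpa [Nat.cast_natAbs] using
    mul_le_mul_of_nonneg_left (hdiv _ (Int.natAbs_ne_zero.2 hm)) zero_le_two

theorem card_filter_tuplePoly_eq_le {k : ℕ} (s : Finset (Fin k → ℤ)) (g : ℤ[X]) :
    #{x ∈ s | tuplePoly x = g} ≤ k ^ k := by
  rcases Finset.eq_empty_or_nonempty {x ∈ s | tuplePoly x = g} with hempty | ⟨x₀, hx₀⟩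
  · simp [hempty]
  have hg : tuplePoly x₀ = g := (mem_filter.1 hx₀).2
  have hsub : {x ∈ s | tuplePoly x = g} ⊆
      Fintype.piFinset fun _ => g.roots.toFinset.image Neg.neg := by
    intro x hx
    simp only [Fintype.mem_piFinset, mem_image, Multiset.mem_toFinset]
    intro i
    refine ⟨-x i, ?_, neg_neg _⟩
    rw [← (mem_filter.1 hx).2, mem_roots (tuplePoly_monic x).ne_zero]
    exact eval_neg_apply_tuplePoly x i
  calc #{x ∈ s | tuplePoly x = g} ≤ ∏ _i : Fin k, #(g.roots.toFinset.image Neg.neg) := by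
        simpa only [Fintype.card_piFinset] using card_le_card hsub
    _ ≤ ∏ _i : Fin k, k := by
        gcongr
        calc _ ≤ Multiset.card g.roots := card_image_le.trans (Multiset.toFinset_card_le _)
          _ ≤ k := (card_roots' g).trans (hg ▸ natDegree_tuplePoly x₀).le
    _ = k ^ k := by simp

theorem dvd_eval_neg_of_tuplePoly_sub_eq {k : ℕ} {x y : Fin k → ℤ} {h : ℤ[X]}
    (hxy : tuplePoly x - tuplePoly y = h) (i j : Fin k) : y j - x i ∣ h.eval (-x i) := by
  rw [← hxy, eval_sub, eval_neg_apply_tuplePoly, zero_sub, eval_tuplePoly, dvd_neg]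
  exact (dvd_of_eq (neg_add_eq_sub _ _).symm).trans (dvd_prod_of_mem _ (mem_univ j))

noncomputable def solPairs (k X : ℕ) (h : ℤ[X]) : Finset ((Fin k → ℤ) × (Fin k → ℤ)) :=
  {p ∈ cube k X ×ˢ cube k X | tuplePoly p.1 - tuplePoly p.2 = h}

section SolPairs

variable {k X : ℕ} {h : ℤ[X]}

theorem mem_solPairs {p : (Fin k → ℤ) × (Fin k → ℤ)} :
    p ∈ solPairs k X h ↔ p.1 ∈ cube k X ∧ p.2 ∈ cube k X ∧ tuplePoly p.1 - tuplePoly p.2 = h := by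
  rw [solPairs, mem_filter, mem_product, and_assoc]

theorem card_solPairs_filter_exists_eval_ne_zero_le {M : ℕ}
    (hM : ∀ t ∈ Icc 1 (X : ℤ), #(h.eval (-t)).divisors ≤ M) :
    #{p ∈ solPairs k X h | ∃ i, h.eval (-p.1 i) ≠ 0} ≤ k ^ k * (X * M ^ k) := by
  set A := {p ∈ solPairs k X h | ∃ i, h.eval (-p.1 i) ≠ 0}
  set Y := (Icc 1 (X : ℤ)).biUnion fun t =>
    Fintype.piFinset fun _ : Fin k => (h.eval (-t)).divisors.image (t + ·)
  -- if `h (-x i) ≠ 0`, every `y j - x i` divides it, which leaves few choices for `y`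
  have hY : ∀ p ∈ A, p.2 ∈ Y := by
    intro p hp
    obtain ⟨hp, i, hi⟩ := mem_filter.1 hp
    obtain ⟨hx, -, hxy⟩ := mem_solPairs.1 hp
    refine mem_biUnion.2 ⟨p.1 i, mem_Icc.2 (mem_cube.1 hx i), Fintype.mem_piFinset.2 fun j => ?_⟩
    exact mem_image.2 ⟨p.2 j - p.1 i,
      Int.mem_divisors.2 ⟨dvd_eval_neg_of_tuplePoly_sub_eq hxy i j, hi⟩, add_sub_cancel _ _⟩
  have hfiber : ∀ y ∈ Y, #{p ∈ A | p.2 = y} ≤ k ^ k := by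
    intro y _
    refine le_trans (card_le_card_of_injOn Prod.fst (fun p hp => ?_) ?_)
      (card_filter_tuplePoly_eq_le (cube k X) (tuplePoly y + h))
    · obtain ⟨hp, hpy⟩ := mem_filter.1 hp
      obtain ⟨hx, -, hxy⟩ := mem_solPairs.1 (mem_filter.1 hp).1
      exact mem_filter.2 ⟨hx, by rw [← hxy, hpy, add_sub_cancel]⟩
    · intro p hp q hq hpq
      exact Prod.ext hpq (((mem_filter.1 hp).2).trans ((mem_filter.1 hq).2).symm)
  have hYcard : #Y ≤ X * M ^ k := by
    refine card_biUnion_le.trans ((sum_le_sum fun t ht => ?_).trans_eq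
      (by rw [sum_const, Int.card_Icc, add_sub_cancel_right, Int.toNat_natCast, smul_eq_mul]))
    rw [Fintype.card_piFinset, prod_const, card_univ, Fintype.card_fin]
    exact Nat.pow_le_pow_left (card_image_le.trans (hM t ht)) k
  exact (card_le_mul_card_image_of_maps_to hY _ hfiber).trans (Nat.mul_le_mul_left _ hYcard)

theorem swap_mem_solPairs_neg {p : (Fin k → ℤ) × (Fin k → ℤ)} (hp : p ∈ solPairs k X h) :
    p.swap ∈ solPairs k X (-h) := by
  obtain ⟨hx, hy, hxy⟩ := mem_solPairs.1 hp
  exact mem_solPairs.2 ⟨hy, hx, by rw [← hxy, Prod.fst_swap, Prod.snd_swap, neg_sub]⟩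

theorem card_solPairs_filter_forall_eval_eq_zero_le (hh : h ≠ 0) (hdeg : h.natDegree ≤ k) :
    #{p ∈ solPairs k X h | ∀ i, h.eval (-p.1 i) = 0 ∧ h.eval (-p.2 i) = 0} ≤ k ^ (2 * k) := by
  set Z := Fintype.piFinset fun _ : Fin k => h.roots.toFinset.image Neg.neg
  have hZ : #Z ≤ k ^ k := by
    rw [Fintype.card_piFinset, prod_const, card_univ, Fintype.card_fin]
    exact Nat.pow_le_pow_left ((card_image_le.trans (Multiset.toFinset_card_le _)).trans
      ((card_roots' h).trans hdeg)) k
  have hmem : ∀ z : Fin k → ℤ, (∀ i, h.eval (-z i) = 0) → z ∈ Z := fun z hz =>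
    Fintype.mem_piFinset.2 fun i =>
      mem_image.2 ⟨-z i, Multiset.mem_toFinset.2 ((mem_roots hh).2 (hz i)), neg_neg _⟩
  calc #{p ∈ solPairs k X h | ∀ i, h.eval (-p.1 i) = 0 ∧ h.eval (-p.2 i) = 0}
      ≤ #(Z ×ˢ Z) := card_le_card fun p hp => mem_product.2
        ⟨hmem _ fun i => ((mem_filter.1 hp).2 i).1, hmem _ fun i => ((mem_filter.1 hp).2 i).2⟩
    _ ≤ k ^ (2 * k) := by rw [card_product, two_mul, pow_add]; exact Nat.mul_le_mul hZ hZ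

theorem card_solPairs_le {M : ℕ} (hh : h ≠ 0) (hdeg : h.natDegree ≤ k)
    (hM : ∀ t ∈ Icc 1 (X : ℤ), #(h.eval (-t)).divisors ≤ M) :
    #(solPairs k X h) ≤ 2 * (k ^ k * (X * M ^ k)) + k ^ (2 * k) := by
  have hM' : ∀ t ∈ Icc 1 (X : ℤ), #((-h).eval (-t)).divisors ≤ M := by
    simpa only [eval_neg, Int.divisors_neg] using hM
  have hswap : #{p ∈ solPairs k X h | ∃ i, h.eval (-p.2 i) ≠ 0} ≤
      #{p ∈ solPairs k X (-h) | ∃ i, (-h).eval (-p.1 i) ≠ 0} := by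
    refine card_le_card_of_injOn Prod.swap (fun p hp => ?_) (Prod.swap_injective.injOn)
    obtain ⟨hp, i, hi⟩ := mem_filter.1 hp
    exact mem_filter.2 ⟨swap_mem_solPairs_neg hp, i, by simpa using hi⟩
  calc #(solPairs k X h)
      ≤ #{p ∈ solPairs k X h | ∃ i, h.eval (-p.1 i) ≠ 0} +
        #{p ∈ solPairs k X h | ∃ i, h.eval (-p.2 i) ≠ 0} +
        #{p ∈ solPairs k X h | ∀ i, h.eval (-p.1 i) = 0 ∧ h.eval (-p.2 i) = 0} := by
        refine (card_le_card fun p hp => ?_).trans ((card_union_le _ _).trans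
          (Nat.add_le_add_right (card_union_le _ _) _))
        by_cases h1 : ∃ i, h.eval (-p.1 i) ≠ 0
        · exact mem_union_left _ (mem_union_left _ (mem_filter.2 ⟨hp, h1⟩))
        by_cases h2 : ∃ i, h.eval (-p.2 i) ≠ 0
        · exact mem_union_left _ (mem_union_right _ (mem_filter.2 ⟨hp, h2⟩))
        simp only [not_exists, not_not] at h1 h2
        exact mem_union_right _ (mem_filter.2 ⟨hp, fun i => ⟨h1 i, h2 i⟩⟩)
    _ ≤ 2 * (k ^ k * (X * M ^ k)) + k ^ (2 * k) := by
        have hA := card_solPairs_filter_exists_eval_ne_zero_le (k := k) hM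
        have hB := card_solPairs_filter_exists_eval_ne_zero_le (k := k) hM'
        have hC := card_solPairs_filter_forall_eval_eq_zero_le (X := X) hh hdeg
        omega

end SolPairs

theorem exists_card_solPairs_le_mul_rpow (k : ℕ) {ε : ℝ} (hε : 0 < ε) :
    ∃ C : ℝ, 0 ≤ C ∧ ∀ X : ℕ, 1 ≤ X → ∀ x ∈ cube k X, ∀ y ∈ cube k X, tuplePoly x ≠ tuplePoly y →
      (#(solPairs k X (tuplePoly x - tuplePoly y)) : ℝ) ≤ C * (X : ℝ) ^ (1 + ε) := by
  -- `|h(-t)| ≤ 2 X^k` and the divisor counts of `k` coordinates are multiplied: take `k² δ ≤ ε`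
  set δ := ε / ((k : ℝ) ^ 2 + 1)
  have hδ : 0 < δ := by positivity
  have hkδ : (k : ℝ) * δ * k ≤ ε := by
    rw [show (k : ℝ) * δ * k = ε * (k ^ 2 / (k ^ 2 + 1)) by simp only [δ]; ring]
    exact mul_le_of_le_one_right hε.le ((div_le_one (by positivity)).2 (by linarith))
  obtain ⟨C₀, hC₀, hdiv⟩ := Int.exists_card_divisors_le_mul_rpow hδ
  refine ⟨2 * k ^ k * (C₀ * 2 ^ δ) ^ k + k ^ (2 * k), by positivity, fun X hX x hx y hy hxy => ?_⟩
  have hX1 : (1 : ℝ) ≤ X := by exact_mod_cast hX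
  set B := C₀ * (2 * (X : ℝ) ^ k) ^ δ
  have hM : ∀ t ∈ Icc 1 (X : ℤ), #((tuplePoly x - tuplePoly y).eval (-t)).divisors ≤ ⌊B⌋₊ := by
    intro t ht
    refine Nat.le_floor ((hdiv _).trans (mul_le_mul_of_nonneg_left ?_ hC₀))
    have habs := (abs_sub _ _).trans
      (add_le_add (abs_eval_neg_tuplePoly_le hx ht) (abs_eval_neg_tuplePoly_le hy ht))
    rw [eval_sub]
    gcongr
    exact_mod_cast habs.trans_eq (two_mul _).symm
  have hdeg : (tuplePoly x - tuplePoly y).natDegree ≤ k :=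
    (natDegree_sub_le_of_le (natDegree_tuplePoly x).le (natDegree_tuplePoly y).le).trans_eq
      (max_self k)
  have hBk : (⌊B⌋₊ : ℝ) ^ k ≤ (C₀ * 2 ^ δ) ^ k * (X : ℝ) ^ ε := by
    calc (⌊B⌋₊ : ℝ) ^ k ≤ B ^ k := by gcongr; exact Nat.floor_le (by positivity)
      _ = (C₀ * 2 ^ δ) ^ k * (X : ℝ) ^ ((k : ℝ) * δ * k) := by
          rw [Real.rpow_mul (by positivity), Real.rpow_natCast, ← mul_pow, Real.rpow_mul
            (by positivity), Real.rpow_natCast, mul_assoc, ← Real.mul_rpow zero_le_two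
            (by positivity)]
      _ ≤ (C₀ * 2 ^ δ) ^ k * (X : ℝ) ^ ε := by gcongr
  have hXε : (1 : ℝ) ≤ (X : ℝ) ^ (1 + ε) := Real.one_le_rpow hX1 (by linarith)
  calc (#(solPairs k X (tuplePoly x - tuplePoly y)) : ℝ)
      ≤ 2 * ((k : ℝ) ^ k * (X * (⌊B⌋₊ : ℝ) ^ k)) + (k : ℝ) ^ (2 * k) := by
        exact_mod_cast card_solPairs_le (sub_ne_zero.2 hxy) hdeg hM
    _ ≤ 2 * ((k : ℝ) ^ k * (X * ((C₀ * 2 ^ δ) ^ k * (X : ℝ) ^ ε))) +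
        (k : ℝ) ^ (2 * k) * (X : ℝ) ^ (1 + ε) := by
        gcongr
        exact le_mul_of_one_le_right (by positivity) hXε
    _ = (2 * k ^ k * (C₀ * 2 ^ δ) ^ k + k ^ (2 * k)) * (X : ℝ) ^ (1 + ε) := by
        rw [Real.rpow_add (by positivity), Real.rpow_one]
        ring

theorem eq_zero_of_triangular {R : Type*} [Ring R] [NoZeroDivisors R] {k r : ℕ}
    {kk : Fin r → ℕ} {a : Fin r → ℕ → R}
    (hdeg : ∀ j, a j (kk j) ≠ 0 ∧ ∀ l, kk j < l → l ≤ k → a j l = 0) {d : ℕ → R}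
    (hd : ∀ j, ∑ l ∈ Icc 1 k, a j l * d l = 0)
    (hfree : ∀ l ∈ Icc 1 k, l ∉ Set.range kk → d l = 0) :
    ∀ l ∈ Icc 1 k, d l = 0 := by
  intro l
  induction l using Nat.strong_induction_on with
  | _ l ih =>
    intro hl
    by_cases hlk : l ∈ Set.range kk
    swap
    · exact hfree l hl hlk
    obtain ⟨j, rfl⟩ := hlk
    -- the `j`-th equation involves `d (kk j)` and, below it, only values that vanish by induction
    have hsum := hd j
    rw [sum_eq_single_of_mem _ hl fun l' hl' hne => ?_] at hsum
    · exact (mul_eq_zero.1 hsum).resolve_left (hdeg j).1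
    rcases lt_or_gt_of_ne hne with hlt | hgt
    · rw [ih l' hlt hl', mul_zero]
    · rw [(hdeg j).2 l' hgt (mem_Icc.1 hl').2, zero_mul]

theorem cast_card_le_mul_card_of_maps_to {α β : Type*} [DecidableEq β] {f : α → β}
    {s : Finset α} {t : Finset β} (hf : ∀ a ∈ s, f a ∈ t) {N : ℝ} (hN : 0 ≤ N)
    (hfiber : ∀ b ∈ t, ∀ a ∈ s, f a = b → (#{a ∈ s | f a = b} : ℝ) ≤ N) :
    (#s : ℝ) ≤ N * #t := by
  rw [card_eq_sum_card_fiberwise hf, Nat.cast_sum, mul_comm, ← nsmul_eq_mul]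
  refine sum_le_card_nsmul _ _ _ fun b hb => ?_
  rcases Finset.eq_empty_or_nonempty {a ∈ s | f a = b} with hempty | ⟨a, ha⟩
  · rw [hempty, card_empty, Nat.cast_zero]; exact hN
  · exact hfiber b hb a (mem_filter.1 ha).1 (mem_filter.1 ha).2

theorem card_pi_Icc_neg_le (L : Finset ℕ) {c X : ℕ} (hc : 1 ≤ c) (hX : 1 ≤ X) :
    #(L.pi fun l => Icc (-((c * X ^ l : ℕ) : ℤ)) (c * X ^ l : ℕ)) ≤
      (3 * c) ^ #L * X ^ ∑ l ∈ L, l := by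
  rw [card_pi, ← prod_pow_eq_pow_sum, ← prod_const, ← prod_mul_distrib]
  refine prod_le_prod' fun l _ => ?_
  have hpos : 1 ≤ c * X ^ l := Nat.mul_le_mul hc (Nat.one_le_pow _ _ hX)
  rw [Int.card_Icc, sub_neg_eq_add, ← Nat.cast_add_one, ← Nat.cast_add, Int.toNat_natCast]
  linarith

theorem sum_Icc_one_id_mul_two (k : ℕ) : (∑ l ∈ Icc 1 k, l) * 2 = k * (k + 1) := by
  have h : ∑ l ∈ Icc 1 k, l = ∑ l ∈ range (k + 1), l := by
    rw [range_eq_Ico, sum_eq_sum_Ico_succ_bot (Nat.succ_pos k), zero_add]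
    rfl
  rw [h, sum_range_id_mul_two, add_tsub_cancel_right, mul_comm]

section Paucity

variable {k r : ℕ} {kk : Fin r → ℕ} {a : Fin r → ℕ → ℤ} {φ : Fin r → (Fin k → ℤ) → ℤ}

theorem sum_mul_coeff_tuplePoly_sub (hφ : ∀ j x, φ j x = ∑ l ∈ Icc 1 k, a j l * esymm k l x)
    (j : Fin r) (x y : Fin k → ℤ) :
    ∑ l ∈ Icc 1 k, a j l * (tuplePoly x - tuplePoly y).coeff (k - l) = φ j x - φ j y := by
  rw [hφ, hφ, ← sum_sub_distrib]
  refine sum_congr rfl fun l hl => ?_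
  rw [coeff_sub, coeff_tuplePoly _ (mem_Icc.1 hl).2, coeff_tuplePoly _ (mem_Icc.1 hl).2, mul_sub]

theorem tuplePoly_sub_eq_of_coeff_sdiff_eq
    (hdeg : ∀ j, a j (kk j) ≠ 0 ∧ ∀ l, kk j < l → l ≤ k → a j l = 0)
    (hφ : ∀ j x, φ j x = ∑ l ∈ Icc 1 k, a j l * esymm k l x) {x y x' y' : Fin k → ℤ}
    (hxy : ∀ j, φ j x = φ j y) (hxy' : ∀ j, φ j x' = φ j y')
    (hcoeff : ∀ l ∈ Icc 1 k \ univ.image kk, (tuplePoly x - tuplePoly y).coeff (k - l) =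
      (tuplePoly x' - tuplePoly y').coeff (k - l)) :
    tuplePoly x - tuplePoly y = tuplePoly x' - tuplePoly y' := by
  refine tuplePoly_sub_eq_of_coeff_eq fun l hl => sub_eq_zero.1 ?_
  refine eq_zero_of_triangular (d := fun l => (tuplePoly x - tuplePoly y).coeff (k - l) -
    (tuplePoly x' - tuplePoly y').coeff (k - l)) hdeg (fun j => ?_) (fun l hl hfree => ?_) l hl
  · simp only [mul_sub, sum_sub_distrib, sum_mul_coeff_tuplePoly_sub hφ, hxy, hxy', sub_self]
  · exact sub_eq_zero.2 (hcoeff l (mem_sdiff.2 ⟨hl, by simpa using hfree⟩))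

theorem card_nonPermPairs_le
    (hdeg : ∀ j, a j (kk j) ≠ 0 ∧ ∀ l, kk j < l → l ≤ k → a j l = 0)
    (hφ : ∀ j x, φ j x = ∑ l ∈ Icc 1 k, a j l * esymm k l x) {X : ℕ} (hX : 1 ≤ X)
    {N : ℝ} (hN0 : 0 ≤ N) (hN : ∀ x ∈ cube k X, ∀ y ∈ cube k X, tuplePoly x ≠ tuplePoly y →
      (#(solPairs k X (tuplePoly x - tuplePoly y)) : ℝ) ≤ N) :
    (#(nonPermPairs k X fun x y => ∀ j, φ j x = φ j y) : ℝ) ≤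
      N * ((3 * 2 ^ (k + 1)) ^ #(Icc 1 k \ univ.image kk) *
        X ^ ∑ l ∈ Icc 1 k \ univ.image kk, l) := by
  set L := Icc 1 k \ univ.image kk
  set S := nonPermPairs k X fun x y => ∀ j, φ j x = φ j y
  -- by triangularity, the coefficients of `tuplePoly x - tuplePoly y` at the free degrees `L`
  -- determine the whole polynomial
  set f : (Fin k → ℤ) × (Fin k → ℤ) → (l : ℕ) → l ∈ L → ℤ :=
    fun p l _ => (tuplePoly p.1 - tuplePoly p.2).coeff (k - l)
  set T := L.pi fun l => Icc (-((2 ^ (k + 1) * X ^ l : ℕ) : ℤ)) (2 ^ (k + 1) * X ^ l : ℕ)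
  have hmem : ∀ p ∈ S, p.1 ∈ cube k X ∧ p.2 ∈ cube k X ∧ ∀ j, φ j p.1 = φ j p.2 := fun p hp =>
    have hp := mem_filter.1 hp
    ⟨(mem_product.1 hp.1).1, (mem_product.1 hp.1).2, hp.2.1⟩
  have hf : ∀ p ∈ S, f p ∈ T := by
    intro p hp
    refine mem_pi.2 fun l hl => mem_Icc.2 (abs_le.1 ?_)
    obtain ⟨hx, hy, -⟩ := hmem p hp
    have hlk := (mem_Icc.1 (mem_sdiff.1 hl).1).2
    simp only [f, coeff_sub, coeff_tuplePoly _ hlk]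
    push_cast
    linarith [abs_sub (esymm k l p.1) (esymm k l p.2), abs_esymm_le (l := l) hx,
      abs_esymm_le (l := l) hy,
      show (2 : ℤ) ^ (k + 1) * X ^ l = 2 * (2 ^ k * X ^ l) by ring]
  have hfiber : ∀ v ∈ T, ∀ p₀ ∈ S, f p₀ = v → (#{p ∈ S | f p = v} : ℝ) ≤ N := by
    rintro v - p₀ hp₀ rfl
    obtain ⟨hx₀, hy₀, hφ₀⟩ := hmem p₀ hp₀
    have hne : tuplePoly p₀.1 ≠ tuplePoly p₀.2 := fun h =>
      (mem_filter.1 hp₀).2.2 (exists_perm_of_tuplePoly_eq h)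
    refine le_trans ?_ (hN _ hx₀ _ hy₀ hne)
    refine Nat.cast_le.2 (card_le_card fun p hp => ?_)
    obtain ⟨hp, hpv⟩ := mem_filter.1 hp
    obtain ⟨hx, hy, hφp⟩ := hmem p hp
    exact mem_solPairs.2 ⟨hx, hy, tuplePoly_sub_eq_of_coeff_sdiff_eq hdeg hφ hφp hφ₀
      fun l hl => congrFun (congrFun hpv l) hl⟩
  calc (#S : ℝ) ≤ N * #T := cast_card_le_mul_card_of_maps_to hf hN0 hfiber
    _ ≤ N * ((3 * 2 ^ (k + 1)) ^ #L * X ^ ∑ l ∈ L, l) := by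
        gcongr
        exact_mod_cast card_pi_Icc_neg_le L Nat.one_le_two_pow hX

theorem cast_sum_sdiff_image_eq (hr : 0 < r) (hmono : StrictMono kk) (hfirst : 1 ≤ kk ⟨0, hr⟩)
    (hlast : kk ⟨r - 1, Nat.sub_lt hr Nat.one_pos⟩ = k) :
    ((∑ l ∈ Icc 1 k \ univ.image kk, l : ℕ) : ℝ) = (k * (k + 1) : ℝ) / 2 - ∑ j, (kk j : ℝ) := by
  have hsub : univ.image kk ⊆ Icc 1 k := fun l hl => by
    obtain ⟨j, -, rfl⟩ := mem_image.1 hl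
    exact mem_Icc.2 ⟨hfirst.trans (hmono.monotone (Fin.le_def.2 (Nat.zero_le _))),
      hlast ▸ hmono.monotone (Fin.le_def.2 (by simp only; omega))⟩
  have hsplit := sum_sdiff hsub (f := id)
  rw [sum_image fun i _ j _ h => hmono.injective h] at hsplit
  have hgauss : ((∑ l ∈ Icc 1 k, l : ℕ) : ℝ) * 2 = k * (k + 1) := by
    exact_mod_cast sum_Icc_one_id_mul_two k
  have hsplit' : ((∑ l ∈ Icc 1 k \ univ.image kk, l : ℕ) : ℝ) + ∑ j, (kk j : ℝ) =
      ((∑ l ∈ Icc 1 k, l : ℕ) : ℝ) := by exact_mod_cast hsplit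
  linarith

end Paucity

/-- Theorem 1.1, first part. Let `φ_1,…,φ_r` be symmetric polynomials of the shape
`φ_j(z) = Σ_{l=1}^k a_{jl} σ_l(z)` with respective degrees `k_1 < … < k_r = k`. Then for each
`ε > 0` one has `N_k(X;φ) = T_k(X) + O(X^{w(φ)+1+ε})`, where
`w(φ) = k(k+1)/2 − (k_1 + … + k_r)`. -/
theorem paucity_linear_combinations (k r : ℕ) (hr : 0 < r) (kk : Fin r → ℕ)
    (hmono : StrictMono kk) (hfirst : 1 ≤ kk ⟨0, hr⟩)
    (hlast : kk ⟨r - 1, Nat.sub_lt hr Nat.one_pos⟩ = k)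
    (a : Fin r → ℕ → ℤ)
    (hdeg : ∀ j, a j (kk j) ≠ 0 ∧ ∀ l, kk j < l → l ≤ k → a j l = 0)
    (φ : Fin r → (Fin k → ℤ) → ℤ)
    (hφ : ∀ j x, φ j x = ∑ l ∈ Finset.Icc 1 k, a j l * esymm k l x)
    (ε : ℝ) (hε : 0 < ε) :
    (fun X : ℕ =>
        (pairCount k X (fun x y => ∀ j, φ j x = φ j y) : ℝ) - (permCount k X : ℝ))
      =O[atTop]
      fun X : ℕ => (X : ℝ) ^ ((k * (k + 1) : ℝ) / 2 - (∑ j, (kk j : ℝ)) + 1 + ε) := by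
  have hperm : ∀ x (π : Equiv.Perm (Fin k)) j, φ j x = φ j (x ∘ π) := fun x π j => by
    simp only [hφ]
    exact sum_congr rfl fun l hl => by rw [esymm_comp_perm x π (mem_Icc.1 hl).2]
  obtain ⟨C, hC, hsol⟩ := exists_card_solPairs_le_mul_rpow k hε
  set L := Icc 1 k \ univ.image kk
  refine isBigO_iff.2 ⟨C * (3 * 2 ^ (k + 1)) ^ #L, ?_⟩
  filter_upwards [eventually_ge_atTop 1] with X hX
  have hX0 : (0 : ℝ) < X := by exact_mod_cast hX
  rw [pairCount_sub_permCount k X hperm, Real.norm_of_nonneg (by positivity),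
    Real.norm_of_nonneg (by positivity)]
  calc _ ≤ C * (X : ℝ) ^ (1 + ε) * ((3 * 2 ^ (k + 1)) ^ #L * X ^ ∑ l ∈ L, l) := by
        exact_mod_cast card_nonPermPairs_le hdeg hφ hX (by positivity) (hsol X hX)
    _ = C * (3 * 2 ^ (k + 1)) ^ #L *
        (X : ℝ) ^ ((k * (k + 1) : ℝ) / 2 - (∑ j, (kk j : ℝ)) + 1 + ε) := by
        rw [← cast_sum_sdiff_image_eq hr hmono hfirst hlast, add_assoc, add_comm _ (1 + ε),
          Real.rpow_add hX0 (1 + ε), Real.rpow_natCast]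
        ring
end

section
/- Let φ_1,…,φ_r be symmetric polynomials of the shape φ_j(z) = a_j σ_{k_j}(z) − Σ_{l < k_j, l ∈ R} b_{jl} σ_l(z) with a_j nonzero integers and b_{jl} integers. Suppose x, y ∈ ℤ^k satisfy φ_j(x) = φ_j(y) for 1 ≤ j ≤ r, and set h_l = σ_l(x) − σ_l(y) for l ∈ R. Then one has the polynomial identity in t: A·(∏_{i=1}^k (t + x_i) − ∏_{i=1}^k (t + y_i)) = Ψ(t;h). -/
/-!
By Vieta, `∏ (t + x_i) - ∏ (t + y_i) = Σ_{l=1}^k (σ_l(x) - σ_l(y)) t^{k-l}`. The terms with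
`l ∈ ℛ` have coefficient `h_l`; for `l = k_j`, multiplying by `A = c_j a_j` and using
`φ_j(x) = φ_j(y)` in the form `a_j (σ_{k_j}(x) - σ_{k_j}(y)) = Σ_{l < k_j, l ∈ ℛ} b_{jl} h_l`
expresses the coefficient through the `h_l` as well. Regrouping by `l` gives `Ψ(t; h)`.
-/

open Finset Asymptotics Filter

/-- The complementary set of exponents `ℛ = {1,…,k} \ {k_1,…,k_r}`. -/
def compSet (k r : ℕ) (kk : Fin r → ℕ) : Finset ℕ :=
  Finset.Icc 1 k \ Finset.image kk Finset.univ

/-- The auxiliary polynomial `Ψ(t; h) = Σ_{l∈ℛ} h_l ψ_l(t)`, where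
`ψ_l(t) = A t^{k−l} + Σ_{j : k_j > l} c_j b_{jl} t^{k−k_j}`, `A = a_1 ⋯ a_r` and
`c_j = A / a_j`. -/
def Psi (k r : ℕ) (kk : Fin r → ℕ) (a : Fin r → ℤ) (b : Fin r → ℕ → ℤ)
    (h : ℕ → ℤ) (t : ℤ) : ℤ :=
  ∑ l ∈ compSet k r kk, h l *
    ((∏ j, a j) * t ^ (k - l) +
      ∑ j ∈ Finset.univ.filter (fun j => l < kk j),
        (∏ i ∈ Finset.univ.erase j, a i) * b j l * t ^ (k - kk j))

open Polynomial in
lemma prod_add_eq_sum_esymm (k : ℕ) (x : Fin k → ℤ) (t : ℤ) :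
    ∏ i, (t + x i) = ∑ l ∈ range (k + 1), esymm k l x * t ^ (k - l) := by
  have := congrArg (eval t) (Multiset.prod_X_add_C_eq_sum_esymm (univ.val.map x))
  simp only [Multiset.map_map, Function.comp_def, eval_prod, eval_finsetSum, eval_add, eval_mul,
    eval_pow, eval_X, eval_C, Multiset.card_map, card_val, card_univ, Fintype.card_fin,
    Finset.esymm_map_val, ← Finset.prod_eq_multiset_prod] at this
  simpa only [esymm, add_comm] using this

lemma esymm_zero (k : ℕ) (x : Fin k → ℤ) : esymm k 0 x = 1 := by
  simp [esymm]

lemma esymm_eq_zero_of_lt {k l : ℕ} (hkl : k < l) (x : Fin k → ℤ) : esymm k l x = 0 := by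
  rw [esymm, powersetCard_eq_empty.mpr (by simpa using hkl), sum_empty]

lemma esymm_sub_esymm_eq_zero_of_notMem_Icc {k l : ℕ} (hl : l ∉ Icc 1 k) (x y : Fin k → ℤ) :
    esymm k l x - esymm k l y = 0 := by
  rcases Nat.eq_zero_or_pos l with rfl | hpos
  · rw [esymm_zero, esymm_zero, sub_self]
  · have hkl : k < l := by simp only [mem_Icc, not_and, not_le] at hl; exact hl hpos
    rw [esymm_eq_zero_of_lt hkl, esymm_eq_zero_of_lt hkl, sub_self]

lemma prod_add_sub_prod_add_eq_sum {k : ℕ} {S : Finset ℕ} (hS : Icc 1 k ⊆ S)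
    (x y : Fin k → ℤ) (t : ℤ) :
    ∏ i, (t + x i) - ∏ i, (t + y i) =
      ∑ l ∈ S, (esymm k l x - esymm k l y) * t ^ (k - l) := by
  have hvanish : ∀ l ∉ Icc 1 k, (esymm k l x - esymm k l y) * t ^ (k - l) = 0 := fun l hl => by
    rw [esymm_sub_esymm_eq_zero_of_notMem_Icc hl, zero_mul]
  have hrange : Icc 1 k ⊆ range (k + 1) := fun l hl => by
    simp only [mem_Icc, mem_range] at hl ⊢; omega
  rw [prod_add_eq_sum_esymm, prod_add_eq_sum_esymm, ← sum_sub_distrib]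
  simp only [← sub_mul]
  rw [← sum_subset hrange fun l _ => hvanish l, sum_subset hS fun l _ => hvanish l]

lemma mul_sub_eq_sum_of_sub_sum_eq {R ι : Type*} [CommRing R] {L : Finset ι} {c s s' : R}
    {b u u' h : ι → R} (heq : c * s - ∑ l ∈ L, b l * u l = c * s' - ∑ l ∈ L, b l * u' l)
    (hh : ∀ l ∈ L, h l = u l - u' l) :
    c * (s - s') = ∑ l ∈ L, b l * h l := by
  calc c * (s - s') = ∑ l ∈ L, b l * u l - ∑ l ∈ L, b l * u' l := by linear_combination heq
    _ = ∑ l ∈ L, b l * h l := by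
      rw [← sum_sub_distrib]
      exact sum_congr rfl fun l hl => by rw [hh l hl, mul_sub]

lemma Psi_eq_mul_sum_add_sum (k r : ℕ) (kk : Fin r → ℕ) (a : Fin r → ℤ) (b : Fin r → ℕ → ℤ)
    (h : ℕ → ℤ) (t : ℤ) :
    Psi k r kk a b h t =
      (∏ j, a j) * ∑ l ∈ compSet k r kk, h l * t ^ (k - l) +
        ∑ j, (∏ i ∈ univ.erase j, a i) *
          (∑ l ∈ (compSet k r kk).filter (· < kk j), b j l * h l) * t ^ (k - kk j) := by
  simp only [Psi, mul_add, sum_add_distrib, mul_sum, sum_mul]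
  congr 1
  · exact sum_congr rfl fun l _ => by ring
  · rw [sum_comm' (t' := univ) (s' := fun j => (compSet k r kk).filter (· < kk j))
      fun l j => by simp only [mem_filter, mem_univ, true_and, and_comm]]
    exact sum_congr rfl fun j _ => sum_congr rfl fun l _ => by ring

theorem multiplicative_relation_identity_general (k r : ℕ) (kk : Fin r → ℕ)
    (hmono : StrictMono kk)
    (a : Fin r → ℤ) (b : Fin r → ℕ → ℤ)
    (x y : Fin k → ℤ)
    (heq : ∀ j,
      a j * esymm k (kk j) x
          - ∑ l ∈ (compSet k r kk).filter (fun l => l < kk j), b j l * esymm k l x =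
        a j * esymm k (kk j) y
          - ∑ l ∈ (compSet k r kk).filter (fun l => l < kk j), b j l * esymm k l y)
    (h : ℕ → ℤ) (hh : ∀ l ∈ compSet k r kk, h l = esymm k l x - esymm k l y) :
    ∀ t : ℤ,
      (∏ j, a j) * ((∏ i, (t + x i)) - ∏ i, (t + y i)) = Psi k r kk a b h t := by
  intro t
  have hrel : ∀ j, a j * (esymm k (kk j) x - esymm k (kk j) y) =
      ∑ l ∈ (compSet k r kk).filter (· < kk j), b j l * h l := fun j =>
    mul_sub_eq_sum_of_sub_sum_eq (heq j) fun l hl => hh l (mem_filter.mp hl).1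
  have hcover : Icc 1 k ⊆ compSet k r kk ∪ image kk univ := by
    rw [compSet, sdiff_union_self_eq_union]
    exact subset_union_left
  rw [prod_add_sub_prod_add_eq_sum hcover, sum_union disjoint_sdiff_self_left,
    sum_image fun i _ j _ hij => hmono.injective hij, Psi_eq_mul_sum_add_sum, mul_add]
  congr 1
  · rw [mul_sum, mul_sum]
    exact sum_congr rfl fun l hl => by rw [hh l hl]
  · rw [mul_sum]
    refine sum_congr rfl fun j _ => ?_
    rw [← hrel j, ← mul_prod_erase univ a (mem_univ j)]
    ring

/-- The identity (2.7). If `x, y ∈ ℤ^k` satisfy `φ_j(x) = φ_j(y)` for `1 ≤ j ≤ r`, where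
`φ_j(z) = a_j σ_{k_j}(z) − Σ_{l < k_j, l ∈ ℛ} b_{jl} σ_l(z)`, and `h_l = σ_l(x) − σ_l(y)`
for `l ∈ ℛ`, then `A (∏_{i=1}^k (t + x_i) − ∏_{i=1}^k (t + y_i)) = Ψ(t;h)` identically in
`t`. -/
theorem multiplicative_relation_identity (k r : ℕ) (hr : 0 < r) (kk : Fin r → ℕ)
    (hmono : StrictMono kk) (hfirst : 1 ≤ kk ⟨0, hr⟩)
    (hlast : kk ⟨r - 1, Nat.sub_lt hr Nat.one_pos⟩ = k)
    (a : Fin r → ℤ) (ha : ∀ j, a j ≠ 0) (b : Fin r → ℕ → ℤ)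
    (x y : Fin k → ℤ)
    (heq : ∀ j,
      a j * esymm k (kk j) x
          - ∑ l ∈ (compSet k r kk).filter (fun l => l < kk j), b j l * esymm k l x =
        a j * esymm k (kk j) y
          - ∑ l ∈ (compSet k r kk).filter (fun l => l < kk j), b j l * esymm k l y)
    (h : ℕ → ℤ) (hh : ∀ l ∈ compSet k r kk, h l = esymm k l x - esymm k l y) :
    ∀ t : ℤ,
      (∏ j, a j) * ((∏ i, (t + x i)) - ∏ i, (t + y i)) = Psi k r kk a b h t :=
  multiplicative_relation_identity_general k r kk hmono a b x y heq h hh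
end

section
/- Let φ_1,…,φ_r be symmetric polynomials of the shape φ_j(z) = a_j σ_{k_j}(z) − Υ_j(σ_{l_1}(z),…,σ_{l_R}(z)) with a_j nonzero integers, Υ_j ∈ ℤ[s_1,…,s_R], and degrees k_1,…,k_r satisfying 1 ≤ k_1 < k_2 < … < k_r = k. Then for each ε > 0, the number of pairs (x,y) with 1 ≤ x_i, y_i ≤ X satisfying φ_j(x) = φ_j(y) (1 ≤ j ≤ r), for which {x_1,…,x_k} = {y_1,…,y_k} as sets but (y_1,…,y_k) is not a permutation of (x_1,…,x_k), is O(X^{2w(φ)+ε}). -/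
open Finset Asymptotics Filter

/-! ### Auxiliary lemmas -/

open Polynomial

lemma pdbn_multiset_map_perm {k : ℕ} (e : Equiv.Perm (Fin k)) :
    Multiset.map (⇑e) Finset.univ.val = Finset.univ.val := by
  rw [← Equiv.coe_toEmbedding, ← Finset.map_val, Finset.map_univ_equiv]

lemma pdbn_exists_perm_of_multiset_map_eq {α : Type*} : ∀ {k : ℕ} (x y : Fin k → α),
    Multiset.map x Finset.univ.val = Multiset.map y Finset.univ.val →
    ∃ π : Equiv.Perm (Fin k), y = x ∘ π := by
  intro k
  induction k with
  | zero => exact fun x y _ => ⟨Equiv.refl _, funext fun i => i.elim0⟩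
  | succ n ih =>
    intro x y h
    have hy0 : y 0 ∈ Multiset.map x Finset.univ.val := by
      rw [h]; exact Multiset.mem_map_of_mem _ (Finset.mem_univ_val _)
    obtain ⟨i, -, hi⟩ := Multiset.mem_map.mp hy0
    set x' : Fin (n+1) → α := x ∘ Equiv.swap i 0 with hx'
    have hx'0 : x' 0 = y 0 := by simp [hx', Equiv.swap_apply_right, hi]
    have hmx' : Multiset.map x' Finset.univ.val = Multiset.map x Finset.univ.val := by
      rw [hx', ← Multiset.map_map x (⇑(Equiv.swap i 0)) Finset.univ.val,
        pdbn_multiset_map_perm]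
    have hsucc : ∀ z : Fin (n+1) → α, Multiset.map z Finset.univ.val
        = z 0 ::ₘ Multiset.map (fun j : Fin n => z j.succ) Finset.univ.val := by
      intro z
      rw [Fin.univ_succ, Finset.cons_val, Multiset.map_cons, Finset.map_val, Multiset.map_map]
      rfl
    have htail : Multiset.map (fun j : Fin n => x' j.succ) Finset.univ.val
        = Multiset.map (fun j : Fin n => y j.succ) Finset.univ.val := by
      have := hmx'.trans h
      rw [hsucc x', hsucc y, hx'0] at this
      exact (Multiset.cons_inj_right _).mp this
    obtain ⟨π', hπ'⟩ := ih (fun j => x' j.succ) (fun j => y j.succ) htail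
    refine ⟨(Equiv.Perm.decomposeFin.symm (0, π')).trans (Equiv.swap i 0), funext fun j => ?_⟩
    induction j using Fin.cases with
    | zero =>
      show y 0 = x (Equiv.swap i 0 (Equiv.Perm.decomposeFin.symm (0, π') 0))
      rw [Equiv.Perm.decomposeFin_symm_apply_zero]
      simpa [hx'] using hx'0.symm
    | succ j =>
      show y j.succ = x (Equiv.swap i 0 (Equiv.Perm.decomposeFin.symm (0, π') j.succ))
      rw [Equiv.Perm.decomposeFin_symm_apply_succ]
      have := congrFun hπ' j
      simpa [hx'] using this

lemma pdbn_esymm_eq_multiset (k l : ℕ) (z : Fin k → ℤ) :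
    (Multiset.map z Finset.univ.val).esymm l = esymm k l z := by
  rw [Finset.esymm_map_val]
  rfl

lemma pdbn_qpoly_eq (k : ℕ) (z : Fin k → ℤ) :
    (∏ i, (X + C (z i)) : ℤ[X]) =
      ∑ l ∈ Finset.range (k+1), C (esymm k l z) * X ^ (k - l) := by
  have h := Multiset.prod_X_add_C_eq_sum_esymm (Multiset.map z Finset.univ.val)
  rw [Multiset.map_map] at h
  simp only [Multiset.card_map] at h
  have hcard : Multiset.card (Finset.univ : Finset (Fin k)).val = k := by
    rw [← Finset.card_def]; simp
  rw [hcard] at h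
  calc (∏ i, (X + C (z i)) : ℤ[X])
      = (Multiset.map (fun i => X + C (z i)) Finset.univ.val).prod := rfl
    _ = _ := by
        rw [show (fun i => (X + C (z i) : Polynomial ℤ)) = ((fun r => X + C r) ∘ z) from rfl, h]
        exact Finset.sum_congr rfl fun l _ => by rw [pdbn_esymm_eq_multiset]

lemma pdbn_qpoly_roots (k : ℕ) (z : Fin k → ℤ) :
    (∏ i, (X + C (z i)) : ℤ[X]).roots = Multiset.map (fun i => -z i) Finset.univ.val := by
  have := Polynomial.roots_multiset_prod_X_sub_C (Multiset.map (fun i => -z i) Finset.univ.val)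
  rw [Multiset.map_map] at this
  have he : ((fun a => (X - C a : ℤ[X])) ∘ fun i => -z i) = fun i => X + C (z i) := by
    funext i; simp [sub_neg_eq_add]
  rw [he] at this
  rw [← this]; rfl

lemma pdbn_qpoly_eval (k : ℕ) (z : Fin k → ℤ) (t : ℤ) :
    (∏ i, (X + C (z i)) : ℤ[X]).eval t = ∏ i, (t + z i) := by
  simp [Polynomial.eval_prod]

lemma pdbn_esymm_zero (k : ℕ) (z : Fin k → ℤ) : esymm k 0 z = 1 := by
  simp [esymm]

lemma pdbn_esymm_bounds (k l : ℕ) (X : ℤ) (hlk : l ≤ k) (z : Fin k → ℤ)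
    (hz : ∀ i, 1 ≤ z i ∧ z i ≤ X) :
    1 ≤ esymm k l z ∧ esymm k l z ≤ (k.choose l : ℤ) * X ^ l := by
  have hterm : ∀ s ∈ Finset.powersetCard l (Finset.univ : Finset (Fin k)),
      1 ≤ ∏ i ∈ s, z i ∧ ∏ i ∈ s, z i ≤ X ^ l := by
    intro s hs
    have hcard : s.card = l := (Finset.mem_powersetCard.mp hs).2
    constructor
    · calc (1:ℤ) = ∏ _i ∈ s, 1 := by simp
        _ ≤ ∏ i ∈ s, z i := Finset.prod_le_prod (by simp) (fun i _ => (hz i).1)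
    · calc ∏ i ∈ s, z i ≤ ∏ _i ∈ s, X :=
          Finset.prod_le_prod (fun i _ => le_trans zero_le_one (hz i).1)
            (fun i _ => (hz i).2)
        _ = X ^ l := by rw [Finset.prod_const, hcard]
  have hcards : (Finset.powersetCard l (Finset.univ : Finset (Fin k))).card = k.choose l := by
    rw [Finset.card_powersetCard, Finset.card_univ, Fintype.card_fin]
  constructor
  · have h1 : (Finset.powersetCard l (Finset.univ : Finset (Fin k))).card • (1:ℤ)
        ≤ esymm k l z :=
      Finset.card_nsmul_le_sum _ _ _ (fun s hs => (hterm s hs).1)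
    have h2 : (1:ℤ) ≤ (k.choose l : ℤ) := by
      exact_mod_cast Nat.one_le_iff_ne_zero.mpr (Nat.choose_pos hlk).ne'
    calc (1:ℤ) ≤ (k.choose l : ℤ) := h2
      _ = (Finset.powersetCard l (Finset.univ : Finset (Fin k))).card • (1:ℤ) := by
        rw [hcards]; simp
      _ ≤ esymm k l z := h1
  · have h1 : esymm k l z
        ≤ (Finset.powersetCard l (Finset.univ : Finset (Fin k))).card • (X ^ l) :=
      Finset.sum_le_card_nsmul _ _ _ (fun s hs => (hterm s hs).2)
    calc esymm k l z ≤ _ := h1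
      _ = (k.choose l : ℤ) * X ^ l := by rw [hcards]; simp

/-- The auxiliary polynomial whose roots capture the common values of a potentially
diagonal pair. -/
noncomputable def pdbnDpoly (k r : ℕ) (kk : Fin r → ℕ) (a : Fin r → ℤ)
    (Υ : Fin r → MvPolynomial {l // l ∈ compSet k r kk} ℤ)
    (b c : {l // l ∈ compSet k r kk} → ℤ) : ℤ[X] :=
  (∑ j : Fin r, C ((∏ j' ∈ Finset.univ.erase j, a j') *
      (MvPolynomial.eval c (Υ j) - MvPolynomial.eval b (Υ j))) * X ^ (k - kk j)) +
  ∑ l : {l // l ∈ compSet k r kk}, C ((∏ j', a j') * (c l - b l)) * X ^ (k - l.1)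

section main
variable (k r : ℕ) (hr : 0 < r) (kk : Fin r → ℕ)
    (hmono : StrictMono kk) (hfirst : 1 ≤ kk ⟨0, hr⟩)
    (hlast : kk ⟨r - 1, Nat.sub_lt hr Nat.one_pos⟩ = k)
    (a : Fin r → ℤ)
    (Υ : Fin r → MvPolynomial {l // l ∈ compSet k r kk} ℤ)

include hr hmono hfirst hlast in
lemma pdbn_kk_mem_Icc : ∀ j, kk j ∈ Finset.Icc 1 k := by
  intro j
  rw [Finset.mem_Icc]
  refine ⟨le_trans hfirst (hmono.monotone (by exact Fin.mk_le_of_le_val (Nat.zero_le _))), ?_⟩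
  rw [← hlast]
  exact hmono.monotone (by exact Fin.le_def.mpr (Nat.le_sub_one_of_lt j.2))

include hr hmono hfirst hlast in
lemma pdbn_Dpoly_eq (x y : Fin k → ℤ)
    (hxy : ∀ j, a j * esymm k (kk j) x -
        MvPolynomial.eval (fun l => esymm k l.1 x) (Υ j) =
      a j * esymm k (kk j) y - MvPolynomial.eval (fun l => esymm k l.1 y) (Υ j)) :
    pdbnDpoly k r kk a Υ (fun l => esymm k l.1 x) (fun l => esymm k l.1 y) =
      C (∏ j', a j') * ((∏ i, (X + C (y i))) - ∏ i, (X + C (x i))) := by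
  have hsub : Finset.image kk Finset.univ ⊆ Finset.Icc 1 k := by
    intro l hl
    obtain ⟨j, -, rfl⟩ := Finset.mem_image.mp hl
    exact pdbn_kk_mem_Icc k r hr kk hmono hfirst hlast j
  have hrange : Finset.range (k+1) = insert 0 (Finset.Icc 1 k) := by
    ext m; simp only [Finset.mem_range, Finset.mem_Icc, Finset.mem_insert]; omega
  set A := ∏ j', a j' with hA
  set F : ℕ → ℤ[X] := fun l => C (A * (esymm k l y - esymm k l x)) * X ^ (k - l) with hF
  have key : pdbnDpoly k r kk a Υ (fun l => esymm k l.1 x) (fun l => esymm k l.1 y)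
      = ∑ l ∈ Finset.range (k+1), F l := by
    rw [hrange, Finset.sum_insert (by simp)]
    have hF0 : F 0 = 0 := by simp [hF, pdbn_esymm_zero]
    rw [hF0, zero_add, ← Finset.union_sdiff_of_subset hsub,
      Finset.sum_union Finset.disjoint_sdiff]
    have e1 : (∑ j : Fin r, C ((∏ j' ∈ Finset.univ.erase j, a j') *
        (MvPolynomial.eval (fun l => esymm k l.1 y) (Υ j)
          - MvPolynomial.eval (fun l => esymm k l.1 x) (Υ j))) * X ^ (k - kk j))
        = ∑ l ∈ Finset.image kk Finset.univ, F l := by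
      rw [Finset.sum_image (fun j _ j' _ h => hmono.injective h)]
      refine Finset.sum_congr rfl fun j _ => ?_
      have h1 : a j * (esymm k (kk j) y - esymm k (kk j) x)
          = MvPolynomial.eval (fun l => esymm k l.1 y) (Υ j)
            - MvPolynomial.eval (fun l => esymm k l.1 x) (Υ j) := by
        have := hxy j; linarith
      have h2 : A * (esymm k (kk j) y - esymm k (kk j) x)
          = (∏ j' ∈ Finset.univ.erase j, a j') *
            (MvPolynomial.eval (fun l => esymm k l.1 y) (Υ j)
              - MvPolynomial.eval (fun l => esymm k l.1 x) (Υ j)) := by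
        calc A * (esymm k (kk j) y - esymm k (kk j) x)
            = (a j * ∏ j' ∈ Finset.univ.erase j, a j')
              * (esymm k (kk j) y - esymm k (kk j) x) := by
              rw [Finset.mul_prod_erase Finset.univ a (Finset.mem_univ j)]
          _ = (∏ j' ∈ Finset.univ.erase j, a j')
              * (a j * (esymm k (kk j) y - esymm k (kk j) x)) := by ring
          _ = _ := by rw [h1]
      rw [hF, ← h2]
    have e2 : (∑ l : {l // l ∈ compSet k r kk},
        C (A * (esymm k l.1 y - esymm k l.1 x)) * X ^ (k - l.1))
        = ∑ l ∈ compSet k r kk, F l := Finset.sum_coe_sort _ F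
    rw [pdbnDpoly, e1, ← hA, e2]; rfl
  rw [key, pdbn_qpoly_eq k x, pdbn_qpoly_eq k y, ← Finset.sum_sub_distrib, Finset.mul_sum]
  refine Finset.sum_congr rfl fun l _ => ?_
  simp only [hF, map_mul, map_sub]
  ring

include hr hmono hfirst hlast in
lemma pdbn_Dpoly_ne_zero (ha : ∀ j, a j ≠ 0) (x y : Fin k → ℤ)
    (hxy : ∀ j, a j * esymm k (kk j) x -
        MvPolynomial.eval (fun l => esymm k l.1 x) (Υ j) =
      a j * esymm k (kk j) y - MvPolynomial.eval (fun l => esymm k l.1 y) (Υ j))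
    (hnp : ¬ ∃ π : Equiv.Perm (Fin k), y = x ∘ π) :
    pdbnDpoly k r kk a Υ (fun l => esymm k l.1 x) (fun l => esymm k l.1 y) ≠ 0 := by
  intro h0
  rw [pdbn_Dpoly_eq k r hr kk hmono hfirst hlast a Υ x y hxy] at h0
  have hA : (∏ j' : Fin r, a j') ≠ 0 := Finset.prod_ne_zero_iff.mpr fun j _ => ha j
  have hCA : (C (∏ j' : Fin r, a j') : ℤ[X]) ≠ 0 :=
    fun h => hA (Polynomial.C_eq_zero.mp h)
  have hqq : (∏ i, (X + C (y i)) : ℤ[X]) = ∏ i, (X + C (x i)) := by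
    have := (mul_eq_zero.mp h0).resolve_left hCA
    linear_combination this
  have hroots := congrArg Polynomial.roots hqq
  rw [pdbn_qpoly_roots, pdbn_qpoly_roots] at hroots
  have hmm : Multiset.map y Finset.univ.val = Multiset.map x Finset.univ.val := by
    have := congrArg (Multiset.map (fun t : ℤ => -t)) hroots
    rw [Multiset.map_map, Multiset.map_map] at this
    simpa [Function.comp_def] using this
  obtain ⟨π, hπ⟩ := pdbn_exists_perm_of_multiset_map_eq x y hmm.symm
  exact hnp ⟨π, hπ⟩

lemma pdbn_Dpoly_natDegree_le (b c : {l // l ∈ compSet k r kk} → ℤ) :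
    (pdbnDpoly k r kk a Υ b c).natDegree ≤ k := by
  refine le_trans (Polynomial.natDegree_add_le _ _) (max_le ?_ ?_) <;>
    refine Polynomial.natDegree_sum_le_of_forall_le _ _ fun i _ =>
      le_trans (Polynomial.natDegree_C_mul_X_pow_le _ _) (Nat.sub_le _ _)

include hr hmono hfirst hlast in
lemma pdbn_count_bound (ha : ∀ j, a j ≠ 0)
    (φ : Fin r → (Fin k → ℤ) → ℤ)
    (hφ : ∀ j z, φ j z =
      a j * esymm k (kk j) z - MvPolynomial.eval (fun l => esymm k l.1 z) (Υ j))
    (X : ℕ) :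
    pairCount k X (fun x y => (∀ j, φ j x = φ j y) ∧ Set.range x = Set.range y ∧
        ¬ ∃ π : Equiv.Perm (Fin k), y = x ∘ π)
      ≤ ((∏ l ∈ compSet k r kk, k.choose l) ^ 2 * (k ^ k) ^ 2)
        * X ^ (2 * ∑ l ∈ compSet k r kk, l) := by
  classical
  set P : (Fin k → ℤ) → (Fin k → ℤ) → Prop := fun x y =>
    (∀ j, φ j x = φ j y) ∧ Set.range x = Set.range y ∧
      ¬ ∃ π : Equiv.Perm (Fin k), y = x ∘ π with hP
  set tup : Finset (Fin k → ℤ) := Fintype.piFinset (fun _ => Finset.Icc (1:ℤ) (X:ℤ)) with htup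
  set T : Finset ((Fin k → ℤ) × (Fin k → ℤ)) :=
    (tup ×ˢ tup).filter (fun p => P p.1 p.2) with hT
  -- Step 1 : pairCount is at most the cardinality of `T`.
  have h1 : pairCount k X P ≤ T.card := by
    rw [pairCount, ← Nat.card_eq_finsetCard T]
    have hmem : ∀ p : {p : (Fin k → ℤ) × (Fin k → ℤ) //
        (∀ i, 1 ≤ p.1 i ∧ p.1 i ≤ (X : ℤ)) ∧ (∀ i, 1 ≤ p.2 i ∧ p.2 i ≤ (X : ℤ)) ∧
          P p.1 p.2}, p.1 ∈ T := by
      rintro ⟨p, h1, h2, h3⟩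
      rw [hT, Finset.mem_filter, Finset.mem_product]
      refine ⟨⟨?_, ?_⟩, h3⟩ <;> rw [htup, Fintype.mem_piFinset] <;> intro i <;>
        rw [Finset.mem_Icc]
      · exact h1 i
      · exact h2 i
    exact Nat.card_le_card_of_injective (fun p => (⟨p.1, hmem p⟩ : {q // q ∈ T}))
      (fun p q h => Subtype.ext (congrArg (Subtype.val : {q // q ∈ T} → _) h))
  -- the invariant map
  set κ : (Fin k → ℤ) × (Fin k → ℤ) →
      ({l // l ∈ compSet k r kk} → ℤ) × ({l // l ∈ compSet k r kk} → ℤ) :=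
    fun p => (fun l => esymm k l.1 p.1, fun l => esymm k l.1 p.2) with hκ
  have h2 : T.card = ∑ v ∈ T.image κ, (T.filter fun p => κ p = v).card :=
    Finset.card_eq_sum_card_fiberwise (fun p hp => Finset.mem_image_of_mem κ hp)
  -- Step 2 : each fiber of κ on T has at most (k^k)^2 elements.
  have h3 : ∀ v ∈ T.image κ, (T.filter fun p => κ p = v).card ≤ (k ^ k) ^ 2 := by
    intro v _
    set RF : Finset ℤ :=
      (pdbnDpoly k r kk a Υ v.1 v.2).roots.toFinset.image (fun t : ℤ => -t) with hRF
    have hsubset : (T.filter fun p => κ p = v) ⊆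
        (Fintype.piFinset fun _ : Fin k => RF) ×ˢ (Fintype.piFinset fun _ : Fin k => RF) := by
      intro p hp
      rw [Finset.mem_filter] at hp
      obtain ⟨hpT, hκp⟩ := hp
      rw [hT, Finset.mem_filter] at hpT
      obtain ⟨-, hφeq, hrg, hnp⟩ := hpT
      have hxy : ∀ j, a j * esymm k (kk j) p.1 -
          MvPolynomial.eval (fun l => esymm k l.1 p.1) (Υ j) =
          a j * esymm k (kk j) p.2 -
          MvPolynomial.eval (fun l => esymm k l.1 p.2) (Υ j) := by
        intro j; have := hφeq j; rwa [hφ j p.1, hφ j p.2] at this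
      have hv1 : v.1 = fun l => esymm k l.1 p.1 := by rw [← hκp]
      have hv2 : v.2 = fun l => esymm k l.1 p.2 := by rw [← hκp]
      have hne : pdbnDpoly k r kk a Υ v.1 v.2 ≠ 0 := by
        rw [hv1, hv2]
        exact pdbn_Dpoly_ne_zero k r hr kk hmono hfirst hlast a Υ ha p.1 p.2 hxy hnp
      have hDeq : pdbnDpoly k r kk a Υ v.1 v.2 =
          C (∏ j', a j') * ((∏ i, (Polynomial.X + C (p.2 i))) - ∏ i, (Polynomial.X + C (p.1 i))) := by
        rw [hv1, hv2]
        exact pdbn_Dpoly_eq k r hr kk hmono hfirst hlast a Υ p.1 p.2 hxy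
      have hroot : ∀ s : ℤ, s ∈ Set.range p.1 → s ∈ RF := by
        intro s hs
        obtain ⟨i, hi⟩ := hs
        have hs2 : s ∈ Set.range p.2 := hrg ▸ ⟨i, hi⟩
        obtain ⟨m, hm⟩ := hs2
        have heval : (pdbnDpoly k r kk a Υ v.1 v.2).eval (-s) = 0 := by
          rw [hDeq]
          have e1 : (∏ i, (Polynomial.X + C (p.1 i)) : ℤ[X]).eval (-s) = 0 := by
            rw [pdbn_qpoly_eval]
            exact Finset.prod_eq_zero (Finset.mem_univ i) (by rw [hi]; ring)
          have e2 : (∏ i, (Polynomial.X + C (p.2 i)) : ℤ[X]).eval (-s) = 0 := by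
            rw [pdbn_qpoly_eval]
            exact Finset.prod_eq_zero (Finset.mem_univ m) (by rw [hm]; ring)
          rw [Polynomial.eval_mul, Polynomial.eval_sub, e1, e2]; ring
        have hmemroots : -s ∈ (pdbnDpoly k r kk a Υ v.1 v.2).roots :=
          Polynomial.mem_roots'.mpr ⟨hne, heval⟩
        rw [hRF]
        exact Finset.mem_image.mpr ⟨-s, Multiset.mem_toFinset.mpr hmemroots, neg_neg s⟩
      rw [Finset.mem_product, Fintype.mem_piFinset, Fintype.mem_piFinset]
      constructor
      · exact fun i => hroot (p.1 i) ⟨i, rfl⟩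
      · intro i
        have : p.2 i ∈ Set.range p.1 := by rw [hrg]; exact ⟨i, rfl⟩
        exact hroot (p.2 i) this
    have hRFcard : RF.card ≤ k := by
      calc RF.card ≤ (pdbnDpoly k r kk a Υ v.1 v.2).roots.toFinset.card :=
            Finset.card_image_le
        _ ≤ Multiset.card (pdbnDpoly k r kk a Υ v.1 v.2).roots :=
            Multiset.toFinset_card_le _
        _ ≤ (pdbnDpoly k r kk a Υ v.1 v.2).natDegree := Polynomial.card_roots' _
        _ ≤ k := pdbn_Dpoly_natDegree_le k r kk a Υ v.1 v.2
    calc (T.filter fun p => κ p = v).card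
        ≤ ((Fintype.piFinset fun _ : Fin k => RF) ×ˢ
            (Fintype.piFinset fun _ : Fin k => RF)).card := Finset.card_le_card hsubset
      _ = (Fintype.piFinset fun _ : Fin k => RF).card *
            (Fintype.piFinset fun _ : Fin k => RF).card := Finset.card_product _ _
      _ = RF.card ^ k * RF.card ^ k := by
            rw [Fintype.card_piFinset]
            simp
      _ ≤ k ^ k * k ^ k :=
            Nat.mul_le_mul (Nat.pow_le_pow_left hRFcard k) (Nat.pow_le_pow_left hRFcard k)
      _ = (k ^ k) ^ 2 := by ring
  -- Step 3 : the image of κ on T is small.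
  set Bf : Finset ({l // l ∈ compSet k r kk} → ℤ) :=
    Fintype.piFinset (fun l => Finset.Icc (1:ℤ) ((k.choose l.1 * X ^ l.1 : ℕ) : ℤ)) with hBf
  have h4 : T.image κ ⊆ Bf ×ˢ Bf := by
    intro v hv
    obtain ⟨p, hpT, rfl⟩ := Finset.mem_image.mp hv
    rw [hT, Finset.mem_filter, Finset.mem_product, htup] at hpT
    obtain ⟨⟨hp1, hp2⟩, -⟩ := hpT
    rw [Fintype.mem_piFinset] at hp1 hp2
    rw [Finset.mem_product]
    constructor <;> rw [hBf, Fintype.mem_piFinset] <;> intro l <;> rw [Finset.mem_Icc]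
    · have hlk : l.1 ≤ k := (Finset.mem_Icc.mp (Finset.mem_sdiff.mp l.2).1).2
      have := pdbn_esymm_bounds k l.1 (X:ℤ) hlk p.1
        (fun i => Finset.mem_Icc.mp (hp1 i))
      refine ⟨this.1, le_trans this.2 (le_of_eq (by push_cast; ring))⟩
    · have hlk : l.1 ≤ k := (Finset.mem_Icc.mp (Finset.mem_sdiff.mp l.2).1).2
      have := pdbn_esymm_bounds k l.1 (X:ℤ) hlk p.2
        (fun i => Finset.mem_Icc.mp (hp2 i))
      refine ⟨this.1, le_trans this.2 (le_of_eq (by push_cast; ring))⟩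
  have hBfcard : Bf.card = (∏ l ∈ compSet k r kk, k.choose l)
      * X ^ (∑ l ∈ compSet k r kk, l) := by
    rw [hBf, Fintype.card_piFinset]
    have hterm : ∀ l : {l // l ∈ compSet k r kk},
        (Finset.Icc (1:ℤ) ((k.choose l.1 * X ^ l.1 : ℕ) : ℤ)).card
          = k.choose l.1 * X ^ l.1 := by
      intro l
      rw [Int.card_Icc,
        show ((k.choose l.1 * X ^ l.1 : ℕ) : ℤ) + 1 - 1 = ((k.choose l.1 * X ^ l.1 : ℕ) : ℤ)
          from by ring, Int.toNat_natCast]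
    calc ∏ l : {l // l ∈ compSet k r kk},
          (Finset.Icc (1:ℤ) ((k.choose l.1 * X ^ l.1 : ℕ) : ℤ)).card
        = ∏ l : {l // l ∈ compSet k r kk}, k.choose l.1 * X ^ l.1 :=
          Finset.prod_congr rfl (fun l _ => hterm l)
      _ = ∏ l ∈ compSet k r kk, k.choose l * X ^ l :=
          Finset.prod_coe_sort (compSet k r kk) (fun l => k.choose l * X ^ l)
      _ = (∏ l ∈ compSet k r kk, k.choose l) * ∏ l ∈ compSet k r kk, X ^ l :=
          Finset.prod_mul_distrib
      _ = _ := by rw [Finset.prod_pow_eq_pow_sum]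
  calc pairCount k X P ≤ T.card := h1
    _ = ∑ v ∈ T.image κ, (T.filter fun p => κ p = v).card := h2
    _ ≤ (T.image κ).card * (k ^ k) ^ 2 := by
        have := Finset.sum_le_card_nsmul (T.image κ) (fun v => (T.filter fun p => κ p = v).card)
          ((k ^ k) ^ 2) h3
        simpa [smul_eq_mul] using this
    _ ≤ (Bf ×ˢ Bf).card * (k ^ k) ^ 2 :=
        Nat.mul_le_mul_right _ (Finset.card_le_card h4)
    _ = (Bf.card * Bf.card) * (k ^ k) ^ 2 := by rw [Finset.card_product]
    _ = ((∏ l ∈ compSet k r kk, k.choose l) ^ 2 * (k ^ k) ^ 2)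
        * X ^ (2 * ∑ l ∈ compSet k r kk, l) := by
        rw [hBfcard]; ring
end main

/-- Nonlinear analogue of the bound (2.10). With
`φ_j(z) = a_j σ_{k_j}(z) − Υ_j(σ_{l_1}(z),…,σ_{l_R}(z))`, the number of pairs `(x,y)` with
`1 ≤ x_i, y_i ≤ X` satisfying `φ_j(x) = φ_j(y)` for all `j`, with
`{x_1,…,x_k} = {y_1,…,y_k}` as sets but `y` not a permutation of `x`, is
`O(X^{2w(φ)+ε})`. -/
theorem potentially_diagonal_bound_nonlinear (k r : ℕ) (hr : 0 < r) (kk : Fin r → ℕ)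
    (hmono : StrictMono kk) (hfirst : 1 ≤ kk ⟨0, hr⟩)
    (hlast : kk ⟨r - 1, Nat.sub_lt hr Nat.one_pos⟩ = k)
    (a : Fin r → ℤ) (ha : ∀ j, a j ≠ 0)
    (Υ : Fin r → MvPolynomial {l // l ∈ compSet k r kk} ℤ)
    (φ : Fin r → (Fin k → ℤ) → ℤ)
    (hφ : ∀ j z, φ j z =
      a j * esymm k (kk j) z - MvPolynomial.eval (fun l => esymm k l.1 z) (Υ j))
    (ε : ℝ) (hε : 0 < ε) :
    (fun X : ℕ =>
        (pairCount k X (fun x y => (∀ j, φ j x = φ j y) ∧ Set.range x = Set.range y ∧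
          ¬ ∃ π : Equiv.Perm (Fin k), y = x ∘ π) : ℝ))
      =O[atTop]
      fun X : ℕ =>
        (X : ℝ) ^ (2 * ((k * (k + 1) : ℝ) / 2 - (∑ j, (kk j : ℝ))) + ε) := by
  classical
  set w : ℕ := ∑ l ∈ compSet k r kk, l with hw
  set CC : ℕ := (∏ l ∈ compSet k r kk, k.choose l) ^ 2 * (k ^ k) ^ 2 with hCC
  have hsub : Finset.image kk Finset.univ ⊆ Finset.Icc 1 k := fun l hl => by
    obtain ⟨j, -, rfl⟩ := Finset.mem_image.mp hl
    exact pdbn_kk_mem_Icc k r hr kk hmono hfirst hlast j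
  have hnat : ((∑ j, kk j) + w) * 2 = k * (k + 1) := by
    have h1 : ∑ l ∈ Finset.Icc 1 k, l = (∑ j, kk j) + w := by
      rw [← Finset.union_sdiff_of_subset hsub, Finset.sum_union Finset.disjoint_sdiff]
      congr 1
      rw [Finset.sum_image (fun j _ j' _ h => hmono.injective h)]
    have h2 : (∑ l ∈ Finset.range (k+1), l) * 2 = (k+1) * k :=
      Finset.sum_range_id_mul_two (k+1)
    have h3 : Finset.range (k+1) = insert 0 (Finset.Icc 1 k) := by
      ext m; simp only [Finset.mem_range, Finset.mem_Icc, Finset.mem_insert]; omega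
    rw [h3, Finset.sum_insert (by simp), Nat.mul_comm (k+1) k] at h2
    rw [← h1]
    omega
  have hexp : 2 * ((k * (k + 1) : ℝ) / 2 - ∑ j, (kk j : ℝ)) = ((2 * w : ℕ) : ℝ) := by
    have hc : (((∑ j, kk j) + w) * 2 : ℕ) = (k * (k + 1) : ℕ) := hnat
    have hc2 : (((∑ j, kk j : ℕ) : ℝ) + (w : ℝ)) * 2 = (k : ℝ) * ((k : ℝ) + 1) := by
      exact_mod_cast congrArg (fun n : ℕ => (n : ℝ)) hc
    push_cast
    push_cast at hc2
    linarith
  refine IsBigO.of_bound CC ?_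
  filter_upwards [eventually_ge_atTop 1] with X hX
  have hX1 : (1:ℝ) ≤ (X:ℝ) := by exact_mod_cast hX
  have hcount := pdbn_count_bound k r hr kk hmono hfirst hlast a Υ ha φ hφ X
  rw [Real.norm_of_nonneg (by positivity),
    Real.norm_of_nonneg (Real.rpow_nonneg (by positivity) _)]
  calc (pairCount k X (fun x y => (∀ j, φ j x = φ j y) ∧ Set.range x = Set.range y ∧
          ¬ ∃ π : Equiv.Perm (Fin k), y = x ∘ π) : ℝ)
      ≤ ((CC * X ^ (2 * w) : ℕ) : ℝ) := by exact_mod_cast hcount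
    _ = (CC : ℝ) * ((X : ℝ) ^ ((2 * w : ℕ) : ℝ)) := by
        rw [Real.rpow_natCast]
        push_cast
        ring
    _ ≤ (CC : ℝ) * ((X : ℝ) ^ (2 * ((k * (k + 1) : ℝ) / 2 - ∑ j, (kk j : ℝ)) + ε)) := by
        refine mul_le_mul_of_nonneg_left ?_ (by positivity)
        refine Real.rpow_le_rpow_of_exponent_le hX1 ?_
        linarith [hexp, hε]
end
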